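/- arXiv:1103.0468 — 4 statements merged into one kernel-verified Lean document; each statement's English description precedes it below -/
import Mathlib

section
/- Let g ≥ 1 and let σ : ℂ^g → ℂ be infinitely complex-differentiable. For i, j, k, l ∈ {1,…,g} define the 4-index Q-function at points where σ(u) ≠ 0 by Q_{ijkl}(u) = −(1/(2σ(u)²)) · (Υ_i Υ_j Υ_k Υ_l [σ(u)σ(v)])|_{v=u}. Then for every u with σ(u) ≠ 0, Q_{ijkl}(u) = ℘_{ijkl}(u) − 2℘_{ij}(u)℘_{kl}(u) − 2℘_{ik}(u)℘_{jl}(u) − 2℘_{il}(u)℘_{jk}(u). -/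
noncomputable section

/-- Partial derivative in the `i`-th coordinate direction. -/
def pd {g : ℕ} (i : Fin g) (f : (Fin g → ℂ) → ℂ) : (Fin g → ℂ) → ℂ :=
  fun u => fderiv ℂ f u (Pi.single i 1)

/-- Iterated partial derivative along a list of coordinate indices. -/
def pdIter {g : ℕ} (l : List (Fin g)) (f : (Fin g → ℂ) → ℂ) : (Fin g → ℂ) → ℂ :=
  l.foldl (fun h i => pd i h) f

/-- The 2-index Kleinian ℘-function ℘_{ij} = (σ_i σ_j − σ σ_{ij}) / σ². -/
def wp2 {g : ℕ} (σ : (Fin g → ℂ) → ℂ) (i j : Fin g) : (Fin g → ℂ) → ℂ :=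
  fun u => (pd i σ u * pd j σ u - σ u * pd j (pd i σ) u) / σ u ^ 2

/-- The m-index Kleinian ℘-function ℘_{i j k₁ ⋯ k_r}, obtained from ℘_{ij} by
successively differentiating with respect to the coordinates in `ks`. -/
def wp {g : ℕ} (σ : (Fin g → ℂ) → ℂ) (i j : Fin g) (ks : List (Fin g)) :
    (Fin g → ℂ) → ℂ :=
  ks.foldl (fun h k => pd k h) (wp2 σ i j)

/-- Partial derivative of a two-variable function in its first argument. -/
def pdU {g : ℕ} (i : Fin g) (F : (Fin g → ℂ) → (Fin g → ℂ) → ℂ) :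
    (Fin g → ℂ) → (Fin g → ℂ) → ℂ :=
  fun u v => fderiv ℂ (fun x => F x v) u (Pi.single i 1)

/-- Partial derivative of a two-variable function in its second argument. -/
def pdV {g : ℕ} (i : Fin g) (F : (Fin g → ℂ) → (Fin g → ℂ) → ℂ) :
    (Fin g → ℂ) → (Fin g → ℂ) → ℂ :=
  fun u v => fderiv ℂ (fun y => F u y) v (Pi.single i 1)

/-- Hirota's bilinear operator Υ_i = ∂/∂u_i − ∂/∂v_i. -/
def hirota {g : ℕ} (i : Fin g) (F : (Fin g → ℂ) → (Fin g → ℂ) → ℂ) :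
    (Fin g → ℂ) → (Fin g → ℂ) → ℂ :=
  fun u v => pdU i F u v - pdV i F u v

/-!
Both sides are rational in the partial derivatives of `σ` at `u` of order at most four.
Applying the four Hirota operators to `σ(x)σ(y)` produces `∑ ± σ_S(x) σ_{S'}(y)` over the
splittings of `{i, j, k, l}` into `S` and its complement `S'`; on the diagonal the terms of `S` and
`S'` coincide, which gives the factor `2`. On the other side, `℘_{ijkl}` is the second
derivative `∂_l ∂_k` of the quotient `(σ_i σ_j - σ σ_{ij}) / σ²`, computed by the second-order
quotient rule. Once mixed partials are identified (Schwarz), clearing the powers of `σ(u)`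
leaves a polynomial identity.
-/

open Topology

section PartialDeriv

variable {g : ℕ} {f h : (Fin g → ℂ) → ℂ} {u : Fin g → ℂ} {m : Fin g}

@[fun_prop]
theorem contDiff_pd (hf : ContDiff ℂ ⊤ f) (m : Fin g) : ContDiff ℂ ⊤ (pd m f) :=
  (hf.fderiv_right le_top).clm_apply contDiff_const

@[fun_prop]
theorem differentiable_pd (hf : ContDiff ℂ ⊤ f) (m : Fin g) : Differentiable ℂ (pd m f) :=
  (contDiff_pd hf m).differentiable (by simp)

theorem pd_add (hf : Differentiable ℂ f) (hh : Differentiable ℂ h) :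
    pd m (f + h) = pd m f + pd m h := by
  ext u; simp [pd, fderiv_add (hf u) (hh u)]

theorem pd_sub (hf : Differentiable ℂ f) (hh : Differentiable ℂ h) :
    pd m (f - h) = pd m f - pd m h := by
  ext u; simp [pd, fderiv_sub (hf u) (hh u)]

theorem pd_mul_apply (hf : DifferentiableAt ℂ f u) (hh : DifferentiableAt ℂ h u) :
    pd m (f * h) u = pd m f u * h u + f u * pd m h u := by
  simp only [pd, fderiv_mul hf hh, add_apply, smul_apply, smul_eq_mul]
  ring

theorem pd_mul (hf : Differentiable ℂ f) (hh : Differentiable ℂ h) :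
    pd m (f * h) = pd m f * h + f * pd m h :=
  funext fun u => pd_mul_apply (hf u) (hh u)

theorem pd_inv_apply (hh : DifferentiableAt ℂ h u) (hu : h u ≠ 0) :
    pd m h⁻¹ u = -pd m h u / h u ^ 2 := by
  have hinv := (hasFDerivAt_inv hu).comp u hh.hasFDerivAt
  change fderiv ℂ ((fun x => x⁻¹) ∘ h) u _ = _
  simp only [hinv.fderiv, ContinuousLinearMap.comp_apply, ContinuousLinearMap.toSpanSingleton_apply,
    smul_eq_mul, pd]
  ring

theorem pd_div_apply (hf : DifferentiableAt ℂ f u) (hh : DifferentiableAt ℂ h u) (hu : h u ≠ 0) :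
    pd m (f / h) u = (pd m f u * h u - f u * pd m h u) / h u ^ 2 := by
  rw [div_eq_mul_inv, pd_mul_apply hf (hh.inv hu), pd_inv_apply hh hu]
  simp only [Pi.inv_apply]
  field_simp
  ring

theorem pd_pd_div_apply (hf : ContDiff ℂ ⊤ f) (hh : ContDiff ℂ ⊤ h) (hu : h u ≠ 0) (k l : Fin g) :
    pd l (pd k (f / h)) u =
      (pd l (pd k f) u * h u ^ 2 - (pd k f u * pd l h u + pd l f u * pd k h u) * h u
        - f u * pd l (pd k h) u * h u + 2 * f u * pd k h u * pd l h u) / h u ^ 3 := by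
  have hfd : Differentiable ℂ f := hf.differentiable (by simp)
  have hhd : Differentiable ℂ h := hh.differentiable (by simp)
  have hev : pd k (f / h) =ᶠ[𝓝 u] (pd k f * h - f * pd k h) / (h * h) := by
    filter_upwards [hh.continuous.continuousAt.eventually_ne hu] with w hw
    rw [pd_div_apply (hfd w) (hhd w) hw]
    simp [sq]
  have hpd : pd l (pd k (f / h)) u = pd l ((pd k f * h - f * pd k h) / (h * h)) u := by
    simp only [pd, hev.fderiv_eq]
  rw [hpd, pd_div_apply (by fun_prop) (by fun_prop) (by simpa using hu)]
  simp (disch := fun_prop) only [pd_sub, pd_mul]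
  simp only [Pi.add_apply, Pi.mul_apply, Pi.sub_apply]
  field_simp
  ring

theorem pd_comm (hf : ContDiff ℂ ⊤ f) (a b : Fin g) : pd a (pd b f) = pd b (pd a f) := by
  funext u
  have hd : DifferentiableAt ℂ (fderiv ℂ f) u :=
    ((hf.fderiv_right (m := ⊤) le_top).differentiable (by simp)) u
  have key : ∀ c d : Fin g,
      pd c (pd d f) u = fderiv ℂ (fderiv ℂ f) u (Pi.single c 1) (Pi.single d 1) := by
    intro c d
    change fderiv ℂ (fun y => fderiv ℂ f y (Pi.single d 1)) u (Pi.single c 1) = _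
    simp [fderiv_clm_apply hd (differentiableAt_const _)]
  rw [key a b, key b a]
  exact (hf.contDiffAt.isSymmSndFDerivAt le_top) _ _

theorem pdIter_perm {L L' : List (Fin g)} (hf : ContDiff ℂ ⊤ f) (hL : L.Perm L') :
    pdIter L f = pdIter L' f := by
  induction hL generalizing f with
  | nil => rfl
  | cons a _ ih => exact ih (contDiff_pd hf a)
  | swap a b L => exact congrArg (pdIter L) (pd_comm hf a b)
  | trans _ _ ih₁ ih₂ => exact (ih₁ hf).trans (ih₂ hf)

end PartialDeriv

section Hirota

variable {g : ℕ} {m : Fin g}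

theorem hirota_mul {A B : (Fin g → ℂ) → ℂ} (hA : Differentiable ℂ A) (hB : Differentiable ℂ B) :
    hirota m (fun x y => A x * B y) = fun x y => pd m A x * B y - A x * pd m B y := by
  funext x y
  simp only [hirota, pdU, pdV, pd, fderiv_mul_const (hA x), fderiv_const_mul (hB y), smul_apply,
    smul_eq_mul]
  ring

theorem hirota_sub {F G : (Fin g → ℂ) → (Fin g → ℂ) → ℂ}
    (hF : Differentiable ℂ fun p : (Fin g → ℂ) × (Fin g → ℂ) => F p.1 p.2)
    (hG : Differentiable ℂ fun p : (Fin g → ℂ) × (Fin g → ℂ) => G p.1 p.2) :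
    hirota m (fun x y => F x y - G x y) = fun x y => hirota m F x y - hirota m G x y := by
  funext x y
  have hF₁ : DifferentiableAt ℂ (fun x => F x y) x := by fun_prop
  have hF₂ : DifferentiableAt ℂ (F x) y := by fun_prop
  have hG₁ : DifferentiableAt ℂ (fun x => G x y) x := by fun_prop
  have hG₂ : DifferentiableAt ℂ (G x) y := by fun_prop
  simp only [hirota, pdU, pdV, fderiv_fun_sub hF₁ hG₁, fderiv_fun_sub hF₂ hG₂, sub_apply]
  ring

theorem hirota_four_mul_self_diag {σ : (Fin g → ℂ) → ℂ} (hσ : ContDiff ℂ ⊤ σ) (i j k l : Fin g)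
    (u : Fin g → ℂ) :
    hirota i (hirota j (hirota k (hirota l (fun x y => σ x * σ y)))) u u =
      2 * (σ u * pd i (pd j (pd k (pd l σ))) u
        - pd i σ u * pd j (pd k (pd l σ)) u - pd j σ u * pd i (pd k (pd l σ)) u
        - pd k σ u * pd i (pd j (pd l σ)) u - pd l σ u * pd i (pd j (pd k σ)) u
        + pd i (pd j σ) u * pd k (pd l σ) u + pd i (pd k σ) u * pd j (pd l σ) u
        + pd i (pd l σ) u * pd j (pd k σ) u) := by
  have hσd : Differentiable ℂ σ := hσ.differentiable (by simp)
  simp (disch := fun_prop) only [hirota_mul, hirota_sub]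
  ring

end Hirota

theorem statement2_general {g : ℕ} (σ : (Fin g → ℂ) → ℂ)
    (hσ : ContDiff ℂ ⊤ σ) (i j k l : Fin g) (u : Fin g → ℂ) (hu : σ u ≠ 0) :
    -(1 / (2 * σ u ^ 2)) *
        hirota i (hirota j (hirota k (hirota l (fun x y => σ x * σ y)))) u u
      = wp σ i j [k, l] u - 2 * wp2 σ i j u * wp2 σ k l u
        - 2 * wp2 σ i k u * wp2 σ j l u - 2 * wp2 σ i l u * wp2 σ j k u := by
  have hσd : Differentiable ℂ σ := hσ.differentiable (by simp)
  have hwp : wp σ i j [k, l] = pd l (pd k ((pd i σ * pd j σ - σ * pd j (pd i σ)) / σ ^ 2)) := rfl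
  have hP : ContDiff ℂ ⊤ (pd i σ * pd j σ - σ * pd j (pd i σ)) :=
    ((contDiff_pd hσ i).mul (contDiff_pd hσ j)).sub (hσ.mul (contDiff_pd (contDiff_pd hσ i) j))
  have rev3 : ∀ a b c, pd a (pd b (pd c σ)) = pd c (pd b (pd a σ)) := fun a b c =>
    pdIter_perm hσ (List.reverse_perm [a, b, c])
  have rev4 : pd i (pd j (pd k (pd l σ))) = pd l (pd k (pd j (pd i σ))) :=
    pdIter_perm hσ (List.reverse_perm [i, j, k, l])
  rw [hirota_four_mul_self_diag hσ, hwp,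
    pd_pd_div_apply (h := σ ^ 2) hP (hσ.pow 2) (pow_ne_zero 2 hu)]
  simp (disch := fun_prop) only [sq, pd_add, pd_sub, pd_mul]
  simp only [wp2, Pi.add_apply, Pi.mul_apply, Pi.sub_apply]
  -- ℘ differentiates innermost-first in the order i, j, k, l, the Hirota side outermost-first
  rw [rev4, rev3 j k l, rev3 i k l, rev3 i j l, rev3 i j k, pd_comm hσ i j, pd_comm hσ i k,
    pd_comm hσ i l, pd_comm hσ j k, pd_comm hσ j l, pd_comm hσ k l]
  field_simp
  ring

/-- the 4-index Q-function Q_{ijkl}, defined via Hirota's operator,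
satisfies Q_{ijkl} = ℘_{ijkl} − 2℘_{ij}℘_{kl} − 2℘_{ik}℘_{jl} − 2℘_{il}℘_{jk}. -/
theorem statement2 {g : ℕ} (hg : 1 ≤ g) (σ : (Fin g → ℂ) → ℂ)
    (hσ : ContDiff ℂ ⊤ σ) (i j k l : Fin g) (u : Fin g → ℂ) (hu : σ u ≠ 0) :
    -(1 / (2 * σ u ^ 2)) *
        hirota i (hirota j (hirota k (hirota l (fun x y => σ x * σ y)))) u u
      = wp σ i j [k, l] u - 2 * wp2 σ i j u * wp2 σ k l u
        - 2 * wp2 σ i k u * wp2 σ j l u - 2 * wp2 σ i l u * wp2 σ j k u :=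
  statement2_general σ hσ i j k l u hu
end
end

section
/- Fix g ≥ 1 and indices i, j, k, l, m, n ∈ {1,…,g}, and define (wherever σ ≠ 0) 𝒮_{ijklmn} = ℘_{ijklmn} − 3(℘_{ijk}℘_{lmn} + ℘_{ijl}℘_{kmn} + ℘_{ijm}℘_{kln} + ℘_{ijn}℘_{klm} + ℘_{ikl}℘_{jmn} + ℘_{ikm}℘_{jln} + ℘_{ikn}℘_{jlm} + ℘_{ilm}℘_{jkn} + ℘_{iln}℘_{jkm} + ℘_{imn}℘_{jkl}), the sum running over all ten ways to split the six index positions into two unordered blocks of three. Then there exists a universal polynomial P in the partial derivatives of σ of order at most 6 such that for every infinitely complex-differentiable σ : ℂ^g → ℂ and every u with σ(u) ≠ 0, σ(u)³ · 𝒮_{ijklmn}(u) = P evaluated at the partial derivatives of σ at u. In particular the 𝒮-function, a priori with poles of order six along the zero set of σ, has poles of order at most three there. -/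
/-!
Since `℘_{i₁⋯i_m} = -∂_{i₁}⋯∂_{i_m} log σ`, the quotient rule shows inductively that
`σ ^ m * ℘_{i₁⋯i_m}` is a universal polynomial `N_{i₁⋯i_m}` in the derivatives of `σ`, computed
by a derivation on polynomials in jet variables `X_B` standing for `∂^B σ`. Hence
`σ ^ 6 * 𝒮_{ijklmn} = N_{ijklmn} - 3 Σ N_{abc} N_{def}`. In terms of the moments `σ_B / σ` the
`℘`'s are (negated) joint cumulants, and `𝒮` is the combination in which every set partition of
the six indices into more than three blocks cancels; so this polynomial is `X_∅ ^ 3` times an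
explicit sum over partitions into at most three blocks, as a direct expansion confirms.
-/

noncomputable section

/-- The 𝒮-function 𝒮_{ijklmn} = ℘_{ijklmn} − 3·Σ ℘_{abc}℘_{def}, the sum over all ten
splittings of the six index positions into two unordered blocks of three. -/
def Sfun {g : ℕ} (σ : (Fin g → ℂ) → ℂ) (i j k l m n : Fin g) : (Fin g → ℂ) → ℂ :=
  fun u =>
    wp σ i j [k, l, m, n] u - 3 *
      (wp σ i j [k] u * wp σ l m [n] u + wp σ i j [l] u * wp σ k m [n] u
        + wp σ i j [m] u * wp σ k l [n] u + wp σ i j [n] u * wp σ k l [m] u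
        + wp σ i k [l] u * wp σ j m [n] u + wp σ i k [m] u * wp σ j l [n] u
        + wp σ i k [n] u * wp σ j l [m] u + wp σ i l [m] u * wp σ j k [n] u
        + wp σ i l [n] u * wp σ j k [m] u + wp σ i m [n] u * wp σ j k [l] u)

open MvPolynomial Filter Topology

section Kleinian

variable {g : ℕ}

@[simp] lemma pdIter_nil (f : (Fin g → ℂ) → ℂ) : pdIter [] f = f := rfl

@[simp] lemma pdIter_singleton (a : Fin g) (f : (Fin g → ℂ) → ℂ) : pdIter [a] f = pd a f := rfl

lemma pdIter_append_singleton (B : List (Fin g)) (a : Fin g) (f : (Fin g → ℂ) → ℂ) :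
    pdIter (B ++ [a]) f = pd a (pdIter B f) := by
  simp [pdIter, List.foldl_append]

lemma ContDiff.pd {f : (Fin g → ℂ) → ℂ} (hf : ContDiff ℂ ⊤ f) (a : Fin g) :
    ContDiff ℂ ⊤ (pd a f) :=
  (hf.fderiv_right le_top).clm_apply contDiff_const

lemma ContDiff.pdIter {f : (Fin g → ℂ) → ℂ} (hf : ContDiff ℂ ⊤ f) (B : List (Fin g)) :
    ContDiff ℂ ⊤ (pdIter B f) := by
  induction B generalizing f with
  | nil => exact hf
  | cons a B ih => exact ih (hf.pd a)

section pd

variable {f h : (Fin g → ℂ) → ℂ} {u : Fin g → ℂ}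

lemma pd_congr_of_eventuallyEq (hfh : f =ᶠ[𝓝 u] h) (a : Fin g) : pd a f u = pd a h u := by
  simp only [pd, hfh.fderiv_eq]

lemma pd_const (c : ℂ) (a : Fin g) : pd a (fun _ => c) u = 0 := by
  simp [pd]

lemma pd_add_s6 (hf : DifferentiableAt ℂ f u) (hh : DifferentiableAt ℂ h u) (a : Fin g) :
    pd a (fun v => f v + h v) u = pd a f u + pd a h u := by
  simp [pd, fderiv_fun_add hf hh]

lemma pd_mul_s6 (hf : DifferentiableAt ℂ f u) (hh : DifferentiableAt ℂ h u) (a : Fin g) :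
    pd a (fun v => f v * h v) u = pd a f u * h u + f u * pd a h u := by
  simp only [pd, fderiv_fun_mul hf hh, add_apply, smul_apply, smul_eq_mul]
  ring

lemma pd_div_pow (hf : DifferentiableAt ℂ f u) (hh : DifferentiableAt ℂ h u) (hu : h u ≠ 0)
    (p : ℕ) (a : Fin g) :
    pd a (fun v => f v / h v ^ p) u = (h u * pd a f u - p * pd a h u * f u) / h u ^ (p + 1) := by
  have hinv := (hasFDerivAt_inv (pow_ne_zero p hu)).comp u (hh.hasFDerivAt.pow p)
  have hq := (hf.hasFDerivAt.fun_mul hinv).fderiv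
  simp only [Function.comp_def] at hq
  simp only [pd, div_eq_mul_inv, hq]
  obtain _ | p := p <;> simp <;> field_simp
  ring

end pd

/-- The formal partial derivative `∂_a` on polynomials in the jet variables `X_B`, `B` a list of
coordinate indices standing for `∂^B σ`. -/
def jetDeriv (a : Fin g) :
    Derivation ℚ (MvPolynomial (List (Fin g)) ℚ) (MvPolynomial (List (Fin g)) ℚ) :=
  mkDerivation ℚ fun B => X (B ++ [a])

@[simp] lemma jetDeriv_X (a : Fin g) (B : List (Fin g)) : jetDeriv a (X B) = X (B ++ [a]) :=
  mkDerivation_X ℚ _ B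

def jetEval (σ : (Fin g → ℂ) → ℂ) (u : Fin g → ℂ) : MvPolynomial (List (Fin g)) ℚ →ₐ[ℚ] ℂ :=
  aeval fun B => pdIter B σ u

@[simp] lemma jetEval_X (σ : (Fin g → ℂ) → ℂ) (u : Fin g → ℂ) (B : List (Fin g)) :
    jetEval σ u (X B) = pdIter B σ u :=
  aeval_X _ B

lemma differentiable_jetEval {σ : (Fin g → ℂ) → ℂ} (hσ : ContDiff ℂ ⊤ σ)
    (p : MvPolynomial (List (Fin g)) ℚ) : Differentiable ℂ fun u => jetEval σ u p := by
  induction p using MvPolynomial.induction_on with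
  | C c => simp [jetEval]
  | add p q hp hq => simpa only [map_add] using hp.fun_add hq
  | mul_X p B hp =>
    simpa only [map_mul, jetEval_X] using hp.fun_mul ((hσ.pdIter B).differentiable (by simp))

lemma pd_jetEval {σ : (Fin g → ℂ) → ℂ} (hσ : ContDiff ℂ ⊤ σ) (a : Fin g)
    (p : MvPolynomial (List (Fin g)) ℚ) (u : Fin g → ℂ) :
    pd a (fun v => jetEval σ v p) u = jetEval σ u (jetDeriv a p) := by
  induction p using MvPolynomial.induction_on with
  | C c => simp [jetEval, pd_const]
  | add p q hp hq =>
    simp only [map_add]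
    rw [pd_add_s6 (differentiable_jetEval hσ p u) (differentiable_jetEval hσ q u), hp, hq]
  | mul_X p B hp =>
    simp only [map_mul, map_add, jetEval_X, Derivation.leibniz, jetDeriv_X, smul_eq_mul,
      pdIter_append_singleton]
    rw [pd_mul_s6 (differentiable_jetEval hσ p u) ((hσ.pdIter B).differentiable (by simp) u), hp]
    ring

/-- The numerator `σ ^ (r + 2) * ℘_{i j k₁ ⋯ k_r}` as a jet polynomial; the list holds the
differentiation indices in reverse order, `k_r :: ⋯ :: [k₁]`. -/
def wpNum (i j : Fin g) : List (Fin g) → MvPolynomial (List (Fin g)) ℚ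
  | [] => X [i] * X [j] - X [] * X [i, j]
  | k :: ks => X [] * jetDeriv k (wpNum i j ks)
      - ((ks.length + 2 : ℕ) : MvPolynomial (List (Fin g)) ℚ) * (X [k] * wpNum i j ks)

theorem wp_eq_jetEval_div {σ : (Fin g → ℂ) → ℂ} (hσ : ContDiff ℂ ⊤ σ) (i j : Fin g)
    (ks : List (Fin g)) {u : Fin g → ℂ} (hu : σ u ≠ 0) :
    wp σ i j ks u = jetEval σ u (wpNum i j ks.reverse) / σ u ^ (ks.length + 2) := by
  induction ks using List.reverseRecOn generalizing u with
  | nil => simp [wp, wpNum, wp2, pdIter]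
  | append_singleton ks k ih =>
    have hwp : wp σ i j ks =ᶠ[𝓝 u]
        fun v => jetEval σ v (wpNum i j ks.reverse) / σ v ^ (ks.length + 2) :=
      (hσ.continuous.continuousAt.eventually_ne hu).mono fun v hv => ih hv
    have hstep : wp σ i j (ks ++ [k]) = pd k (wp σ i j ks) := by simp [wp, List.foldl_append]
    rw [hstep, pd_congr_of_eventuallyEq hwp, pd_div_pow (differentiable_jetEval hσ _ u)
      (hσ.differentiable (by simp) u) hu, pd_jetEval hσ]
    simp only [List.reverse_append, List.reverse_singleton, List.singleton_append,
      List.length_append, List.length_singleton, List.length_reverse, wpNum, map_sub, map_mul,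
      map_natCast, jetEval_X, pdIter_nil, pdIter_singleton]
    push_cast
    ring

/-- The polynomial `σ ^ 3 * 𝒮_{ijklmn}` in the atoms `x B = ∂^B σ`: a sum over the set partitions
of the six indices into at most three blocks, weighted by `x [] ^ (3 - #blocks)` and a coefficient
depending only on the block sizes. -/
def sfunPoly {R : Type*} [CommRing R] (x : List (Fin g) → R) (i j k l m n : Fin g) : R :=
  -x [] ^ 2 * x [i, j, k, l, m, n]
    + x [] * (x [i, j, k, l, m] * x [n] + x [i, j, k, l, n] * x [m] + x [i, j, k, m, n] * x [l]
        + x [i, j, l, m, n] * x [k] + x [i, k, l, m, n] * x [j] + x [j, k, l, m, n] * x [i]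
        + x [i, j, k, l] * x [m, n] + x [i, j, k, m] * x [l, n] + x [i, j, k, n] * x [l, m]
        + x [i, j, l, m] * x [k, n] + x [i, j, l, n] * x [k, m] + x [i, j, m, n] * x [k, l]
        + x [i, k, l, m] * x [j, n] + x [i, k, l, n] * x [j, m] + x [i, k, m, n] * x [j, l]
        + x [i, l, m, n] * x [j, k] + x [j, k, l, m] * x [i, n] + x [j, k, l, n] * x [i, m]
        + x [j, k, m, n] * x [i, l] + x [j, l, m, n] * x [i, k] + x [k, l, m, n] * x [i, j]
        - 2 * (x [i, j, k] * x [l, m, n] + x [i, j, l] * x [k, m, n]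
          + x [i, j, m] * x [k, l, n] + x [i, j, n] * x [k, l, m]
          + x [i, k, l] * x [j, m, n] + x [i, k, m] * x [j, l, n]
          + x [i, k, n] * x [j, l, m] + x [i, l, m] * x [j, k, n]
          + x [i, l, n] * x [j, k, m] + x [i, m, n] * x [j, k, l]))
    - 2 * (x [i, j, k, l] * x [m] * x [n] + x [i, j, k, m] * x [l] * x [n]
        + x [i, j, k, n] * x [l] * x [m] + x [i, j, l, m] * x [k] * x [n]
        + x [i, j, l, n] * x [k] * x [m] + x [i, j, m, n] * x [k] * x [l]
        + x [i, k, l, m] * x [j] * x [n] + x [i, k, l, n] * x [j] * x [m]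
        + x [i, k, m, n] * x [j] * x [l] + x [i, l, m, n] * x [j] * x [k]
        + x [j, k, l, m] * x [i] * x [n] + x [j, k, l, n] * x [i] * x [m]
        + x [j, k, m, n] * x [i] * x [l] + x [j, l, m, n] * x [i] * x [k]
        + x [k, l, m, n] * x [i] * x [j])
    + (x [i, j, k] * (x [l, m] * x [n] + x [l, n] * x [m] + x [m, n] * x [l])
        + x [i, j, l] * (x [k, m] * x [n] + x [k, n] * x [m] + x [m, n] * x [k])
        + x [i, j, m] * (x [k, l] * x [n] + x [k, n] * x [l] + x [l, n] * x [k])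
        + x [i, j, n] * (x [k, l] * x [m] + x [k, m] * x [l] + x [l, m] * x [k])
        + x [i, k, l] * (x [j, m] * x [n] + x [j, n] * x [m] + x [m, n] * x [j])
        + x [i, k, m] * (x [j, l] * x [n] + x [j, n] * x [l] + x [l, n] * x [j])
        + x [i, k, n] * (x [j, l] * x [m] + x [j, m] * x [l] + x [l, m] * x [j])
        + x [i, l, m] * (x [j, k] * x [n] + x [j, n] * x [k] + x [k, n] * x [j])
        + x [i, l, n] * (x [j, k] * x [m] + x [j, m] * x [k] + x [k, m] * x [j])
        + x [i, m, n] * (x [j, k] * x [l] + x [j, l] * x [k] + x [k, l] * x [j])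
        + x [j, k, l] * (x [i, m] * x [n] + x [i, n] * x [m] + x [m, n] * x [i])
        + x [j, k, m] * (x [i, l] * x [n] + x [i, n] * x [l] + x [l, n] * x [i])
        + x [j, k, n] * (x [i, l] * x [m] + x [i, m] * x [l] + x [l, m] * x [i])
        + x [j, l, m] * (x [i, k] * x [n] + x [i, n] * x [k] + x [k, n] * x [i])
        + x [j, l, n] * (x [i, k] * x [m] + x [i, m] * x [k] + x [k, m] * x [i])
        + x [j, m, n] * (x [i, k] * x [l] + x [i, l] * x [k] + x [k, l] * x [i])
        + x [k, l, m] * (x [i, j] * x [n] + x [i, n] * x [j] + x [j, n] * x [i])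
        + x [k, l, n] * (x [i, j] * x [m] + x [i, m] * x [j] + x [j, m] * x [i])
        + x [k, m, n] * (x [i, j] * x [l] + x [i, l] * x [j] + x [j, l] * x [i])
        + x [l, m, n] * (x [i, j] * x [k] + x [i, k] * x [j] + x [j, k] * x [i]))
    - 2 * (x [i, j] * (x [k, l] * x [m, n] + x [k, m] * x [l, n] + x [k, n] * x [l, m])
        + x [i, k] * (x [j, l] * x [m, n] + x [j, m] * x [l, n] + x [j, n] * x [l, m])
        + x [i, l] * (x [j, k] * x [m, n] + x [j, m] * x [k, n] + x [j, n] * x [k, m])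
        + x [i, m] * (x [j, k] * x [l, n] + x [j, l] * x [k, n] + x [j, n] * x [k, l])
        + x [i, n] * (x [j, k] * x [l, m] + x [j, l] * x [k, m] + x [j, m] * x [k, l]))

lemma map_sfunPoly {R S F : Type*} [CommRing R] [CommRing S] [FunLike F R S] [RingHomClass F R S]
    (φ : F) (x : List (Fin g) → R) (i j k l m n : Fin g) :
    φ (sfunPoly x i j k l m n) = sfunPoly (φ ∘ x) i j k l m n := by
  simp only [sfunPoly, map_add, map_sub, map_mul, map_neg, map_pow, map_ofNat, Function.comp_apply]

lemma sfunPoly_congr {R : Type*} [CommRing R] {x y : List (Fin g) → R}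
    (hxy : ∀ B, B.length ≤ 6 → x B = y B) (i j k l m n : Fin g) :
    sfunPoly x i j k l m n = sfunPoly y i j k l m n := by
  simp [sfunPoly, hxy]

theorem wpNum_sfun_eq (i j k l m n : Fin g) :
    wpNum i j [n, m, l, k] - 3 *
      (wpNum i j [k] * wpNum l m [n] + wpNum i j [l] * wpNum k m [n]
        + wpNum i j [m] * wpNum k l [n] + wpNum i j [n] * wpNum k l [m]
        + wpNum i k [l] * wpNum j m [n] + wpNum i k [m] * wpNum j l [n]
        + wpNum i k [n] * wpNum j l [m] + wpNum i l [m] * wpNum j k [n]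
        + wpNum i l [n] * wpNum j k [m] + wpNum i m [n] * wpNum j k [l])
      = X [] ^ 3 * sfunPoly X i j k l m n := by
  simp only [wpNum, sfunPoly, map_sub, map_add, Derivation.leibniz, Derivation.map_natCast,
    jetDeriv_X, smul_eq_mul, List.length_cons, List.length_nil, List.cons_append,
    List.nil_append, map_zero]
  push_cast
  ring

def boundedJetVar (B : List (Fin g)) : MvPolynomial {α : List (Fin g) // α.length ≤ 6} ℚ :=
  if h : B.length ≤ 6 then X ⟨B, h⟩ else 0

lemma aeval_sfunPoly_boundedJetVar (σ : (Fin g → ℂ) → ℂ) (u : Fin g → ℂ) (i j k l m n : Fin g) :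
    aeval (fun v : {α : List (Fin g) // α.length ≤ 6} => pdIter v.1 σ u)
      (sfunPoly boundedJetVar i j k l m n) = jetEval σ u (sfunPoly X i j k l m n) := by
  rw [map_sfunPoly, map_sfunPoly]
  exact sfunPoly_congr (fun B hB => by simp [boundedJetVar, hB]) i j k l m n

end Kleinian

theorem statement6_general {g : ℕ} (i j k l m n : Fin g) :
    ∃ P : MvPolynomial {α : List (Fin g) // α.length ≤ 6} ℚ,
      ∀ σ : (Fin g → ℂ) → ℂ, ContDiff ℂ ⊤ σ → ∀ u : Fin g → ℂ, σ u ≠ 0 →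
        σ u ^ 3 * Sfun σ i j k l m n u
          = MvPolynomial.aeval (fun v : {α : List (Fin g) // α.length ≤ 6} =>
              pdIter v.1 σ u) P := by
  refine ⟨sfunPoly boundedJetVar i j k l m n, fun σ hσ u hu => ?_⟩
  have hnum := congrArg (jetEval σ u) (wpNum_sfun_eq i j k l m n)
  simp only [map_sub, map_add, map_mul, map_pow, map_ofNat, jetEval_X, pdIter_nil] at hnum
  rw [aeval_sfunPoly_boundedJetVar]
  simp only [Sfun, wp_eq_jetEval_div hσ _ _ _ hu, List.reverse_cons, List.reverse_nil,
    List.nil_append, List.cons_append, List.length_cons, List.length_nil]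
  field_simp
  linear_combination σ u ^ 9 * hnum

/-- there is a universal polynomial P in the partial derivatives of σ of
order at most 6 such that σ³·𝒮_{ijklmn} = P(∂^α σ); in particular the 𝒮-function has
poles of order at most three along the zero set of σ. -/
theorem statement6 {g : ℕ} (hg : 1 ≤ g) (i j k l m n : Fin g) :
    ∃ P : MvPolynomial {α : List (Fin g) // α.length ≤ 6} ℚ,
      ∀ σ : (Fin g → ℂ) → ℂ, ContDiff ℂ ⊤ σ → ∀ u : Fin g → ℂ, σ u ≠ 0 →
        σ u ^ 3 * Sfun σ i j k l m n u
          = MvPolynomial.aeval (fun v : {α : List (Fin g) // α.length ≤ 6} =>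
              pdIter v.1 σ u) P :=
  statement6_general i j k l m n
end
end

section
/- Fix g ≥ 1 and indices i, j, k, l, m ∈ {1,…,g}. There exists a universal polynomial P in the partial derivatives of σ of order at most 5 such that for every infinitely complex-differentiable σ : ℂ^g → ℂ and every u with σ(u) ≠ 0, σ(u)⁴ · (℘_{ijklm}(u) + ℘_{ij}(u)℘_{klm}(u) − 13℘_{lm}(u)℘_{ijk}(u)) = P evaluated at the partial derivatives of σ at u. In particular this five-index combination, whose individual terms have poles of order five along the zero set of σ, has poles of order at most four there. -/
noncomputable section

/-! By induction on the number of indices,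
`℘_{i j k₁ ⋯ k_r} = (σ A + (-1)ʳ (r+1)! σ_i σ_j σ_{k₁} ⋯ σ_{k_r}) / σ^(r+2)` with `A` a universal
polynomial in the derivatives of `σ` of order at most `r + 2`: differentiating `N / σⁿ` gives
`(∂N · σ - n N σ_k) / σ^(n+1)`, and only the second term contributes to the leading part.
In `℘_{ijklm} + ℘_{ij} ℘_{klm} - 13 ℘_{lm} ℘_{ijk}` the leading parts cancel, as
`-4! - 2! + 13 · 2! = 0`, so one power of `σ` can be divided out. -/

namespace Kleinian

open MvPolynomial

variable {g : ℕ}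

lemma pd_eq_of_hasFDerivAt {f : (Fin g → ℂ) → ℂ} {f' : (Fin g → ℂ) →L[ℂ] ℂ} {u : Fin g → ℂ}
    (a : Fin g) (hf : HasFDerivAt f f' u) : pd a f u = f' (Pi.single a 1) := by
  rw [pd, hf.fderiv]

lemma pd_add {f h : (Fin g → ℂ) → ℂ} {u : Fin g → ℂ} (a : Fin g)
    (hf : DifferentiableAt ℂ f u) (hh : DifferentiableAt ℂ h u) :
    pd a (fun v => f v + h v) u = pd a f u + pd a h u := by
  rw [pd, fderiv_fun_add hf hh, add_apply]
  rfl

lemma pd_mul {f h : (Fin g → ℂ) → ℂ} {u : Fin g → ℂ} (a : Fin g)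
    (hf : DifferentiableAt ℂ f u) (hh : DifferentiableAt ℂ h u) :
    pd a (fun v => f v * h v) u = pd a f u * h u + f u * pd a h u := by
  rw [pd_eq_of_hasFDerivAt a (hf.hasFDerivAt.fun_mul hh.hasFDerivAt), pd, pd]
  simp only [add_apply, smul_apply, smul_eq_mul]
  ring

lemma pd_pow {f : (Fin g → ℂ) → ℂ} {u : Fin g → ℂ} (a : Fin g)
    (hf : DifferentiableAt ℂ f u) (n : ℕ) :
    pd a (fun v => f v ^ n) u = n * f u ^ (n - 1) * pd a f u := by
  rw [pd_eq_of_hasFDerivAt a (hf.hasFDerivAt.pow n), pd]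
  simp only [nsmul_eq_mul, smul_apply, smul_eq_mul]

lemma contDiff_pd (a : Fin g) {f : (Fin g → ℂ) → ℂ} (hf : ContDiff ℂ ⊤ f) :
    ContDiff ℂ ⊤ (pd a f) :=
  (hf.fderiv_right le_top).clm_apply contDiff_const

lemma contDiff_pdIter {f : (Fin g → ℂ) → ℂ} (hf : ContDiff ℂ ⊤ f) (L : List (Fin g)) :
    ContDiff ℂ ⊤ (pdIter L f) := by
  induction L generalizing f with
  | nil => exact hf
  | cons a L ih => exact ih (contDiff_pd a hf)

lemma pdIter_append_singleton (L : List (Fin g)) (a : Fin g) (f : (Fin g → ℂ) → ℂ) :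
    pdIter (L ++ [a]) f = pd a (pdIter L f) := by
  simp [pdIter, List.foldl_append]

lemma wp_append_singleton (σ : (Fin g → ℂ) → ℂ) (i j : Fin g) (ks : List (Fin g)) (k : Fin g) :
    wp σ i j (ks ++ [k]) = pd k (wp σ i j ks) := by
  simp [wp, List.foldl_append]

lemma pd_eq_div_pow {σ N F : (Fin g → ℂ) → ℂ} (hσ : Differentiable ℂ σ)
    (hN : Differentiable ℂ N) (n : ℕ) (hF : ∀ w, σ w ≠ 0 → F w = N w / σ w ^ (n + 1))
    (a : Fin g) {v : Fin g → ℂ} (hv : σ v ≠ 0) :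
    pd a F v = (pd a N v * σ v - (n + 1) * N v * pd a σ v) / σ v ^ (n + 2) := by
  have hnhds : {w | σ w ≠ 0} ∈ nhds v := (hσ.continuous.isOpen_preimage _ isOpen_ne).mem_nhds hv
  have hFN : F =ᶠ[nhds v] fun w => N w / σ w ^ (n + 1) := Filter.eventually_of_mem hnhds hF
  have hquot : DifferentiableAt ℂ (fun w => N w / σ w ^ (n + 1)) v := by
    simpa only [div_eq_mul_inv] using
      (hN v).fun_mul (((hσ v).fun_pow (n + 1)).fun_inv (pow_ne_zero _ hv))
  have hprod : pd a (fun w => F w * σ w ^ (n + 1)) v = pd a N v := by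
    rw [pd, pd, Filter.EventuallyEq.fderiv_eq]
    filter_upwards [hFN, hnhds] with w hw hw'
    rw [hw]
    field_simp [pow_ne_zero _ (show σ w ≠ 0 from hw')]
  have hFd : DifferentiableAt ℂ F v := hquot.congr_of_eventuallyEq hFN
  rw [pd_mul a hFd ((hσ v).fun_pow _), pd_pow a (hσ v), hF v hv] at hprod
  rw [← hprod]
  push_cast
  field_simp
  ring

/-- Polynomials in the formal partial derivatives `X L = ∂^L σ` of `σ`. -/
abbrev DiffPoly (g : ℕ) := MvPolynomial (List (Fin g)) ℚ

def formalPd (a : Fin g) : Derivation ℚ (DiffPoly g) (DiffPoly g) :=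
  mkDerivation ℚ fun L => X (L ++ [a])

def evalPd (σ : (Fin g → ℂ) → ℂ) (u : Fin g → ℂ) : DiffPoly g →ₐ[ℚ] ℂ :=
  aeval fun L => pdIter L σ u

@[simp]
lemma evalPd_X (σ : (Fin g → ℂ) → ℂ) (u : Fin g → ℂ) (L : List (Fin g)) :
    evalPd σ u (X L) = pdIter L σ u :=
  aeval_X _ _

lemma contDiff_evalPd {σ : (Fin g → ℂ) → ℂ} (hσ : ContDiff ℂ ⊤ σ) (p : DiffPoly g) :
    ContDiff ℂ ⊤ fun u => evalPd σ u p := by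
  induction p using MvPolynomial.induction_on with
  | C c => simpa [evalPd] using contDiff_const
  | add p q hp hq => simpa only [map_add] using hp.add hq
  | mul_X p L hp => simpa only [map_mul, evalPd_X] using hp.mul (contDiff_pdIter hσ L)

lemma pd_evalPd {σ : (Fin g → ℂ) → ℂ} (hσ : ContDiff ℂ ⊤ σ) (a : Fin g) (p : DiffPoly g)
    (u : Fin g → ℂ) :
    pd a (fun u => evalPd σ u p) u = evalPd σ u (formalPd a p) := by
  have hdiff {f : (Fin g → ℂ) → ℂ} (hf : ContDiff ℂ ⊤ f) : DifferentiableAt ℂ f u :=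
    hf.differentiable (by simp) u
  induction p using MvPolynomial.induction_on with
  | C c => simp [evalPd, pd]
  | add p q hp hq =>
    simp only [map_add]
    rw [← hp, ← hq]
    exact pd_add a (hdiff (contDiff_evalPd hσ p)) (hdiff (contDiff_evalPd hσ q))
  | mul_X p L hp =>
    simp only [map_mul, evalPd_X, Derivation.leibniz, smul_eq_mul, map_add]
    rw [pd_mul a (hdiff (contDiff_evalPd hσ p)) (hdiff (contDiff_pdIter hσ L)), hp, formalPd,
      mkDerivation_X, evalPd_X, pdIter_append_singleton]
    ring

lemma supported_length_mono {m n : ℕ} (h : m ≤ n) :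
    supported ℚ {L : List (Fin g) | L.length ≤ m} ≤ supported ℚ {L | L.length ≤ n} :=
  supported_mono fun L (hL : L.length ≤ m) => show L.length ≤ n by omega

lemma formalPd_mem_supported {n : ℕ} {p : DiffPoly g}
    (hp : p ∈ supported ℚ {L | L.length ≤ n}) (a : Fin g) :
    formalPd a p ∈ supported ℚ {L : List (Fin g) | L.length ≤ n + 1} := by
  have hmono := supported_length_mono (g := g) n.le_succ
  induction hp using Algebra.adjoin_induction with
  | mem x hx =>
    obtain ⟨L, hL, rfl⟩ := hx
    rw [formalPd, mkDerivation_X, X_mem_supported]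
    simpa using hL
  | algebraMap r => simp
  | add x y _ _ hx hy => simpa only [map_add] using add_mem hx hy
  | mul x y hx' hy' hx hy =>
    rw [Derivation.leibniz, smul_eq_mul, smul_eq_mul]
    exact add_mem (mul_mem (hmono hx') hy) (mul_mem (hmono hy') hx)

theorem exists_wp_eq_div (i j : Fin g) (ks : List (Fin g)) :
    ∃ A ∈ supported ℚ {L : List (Fin g) | L.length ≤ ks.length + 2},
      ∀ σ : (Fin g → ℂ) → ℂ, ContDiff ℂ ⊤ σ → ∀ u, σ u ≠ 0 →
        wp σ i j ks u = (σ u * evalPd σ u A + (-1) ^ ks.length * (ks.length + 1).factorial *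
          pd i σ u * pd j σ u * (ks.map fun k => pd k σ u).prod) / σ u ^ (ks.length + 2) := by
  induction ks using List.reverseRecOn with
  | nil =>
    refine ⟨-X [i, j], neg_mem (X_mem_supported.mpr (by simp)), fun σ _ u _ => ?_⟩
    simp only [wp, List.foldl_nil, wp2, map_neg, evalPd_X, pdIter, List.foldl_cons, mul_neg,
      List.length_nil, pow_zero, zero_add, Nat.factorial_one, Nat.cast_one, mul_one, one_mul,
      List.map_nil, List.prod_nil]
    ring
  | append_singleton ks k ih =>
    obtain ⟨A, hA, hwp⟩ := ih
    set n := ks.length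
    set c : ℚ := (-1) ^ n * (n + 1).factorial
    set N : DiffPoly g := X [] * A + C c * X [i] * X [j] * (ks.map fun k => X [k]).prod
    refine ⟨formalPd k N - ((n + 2 : ℕ) : DiffPoly g) * A * X [k], ?_, fun σ hσ u hu => ?_⟩
    · have hX {L : List (Fin g)} (m : ℕ) (hL : L.length ≤ m) :
          X L ∈ supported ℚ {L : List (Fin g) | L.length ≤ m} :=
        X_mem_supported.mpr hL
      have hNmem : N ∈ supported ℚ {L : List (Fin g) | L.length ≤ n + 2} := by
        refine add_mem (mul_mem (hX _ (by simp)) hA) (mul_mem (mul_mem (mul_mem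
          (Subalgebra.algebraMap_mem _ c) (hX _ (by simp))) (hX _ (by simp))) (list_prod_mem ?_))
        simp only [List.mem_map]
        rintro _ ⟨k, -, rfl⟩
        exact hX _ (by simp)
      rw [List.length_append, List.length_singleton, add_right_comm]
      exact sub_mem (formalPd_mem_supported hNmem k) (mul_mem (mul_mem (natCast_mem _ _)
        (supported_length_mono (by omega) hA)) (hX _ (by simp)))
    · have hNeval : ∀ w, evalPd σ w N = σ w * evalPd σ w A + (-1) ^ n * (n + 1).factorial *
          pd i σ w * pd j σ w * (ks.map fun k => pd k σ w).prod := by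
        intro w
        simp [N, c, pdIter, map_list_prod, Function.comp_def]
      rw [wp_append_singleton, pd_eq_div_pow (hσ.differentiable (by simp))
        ((contDiff_evalPd hσ N).differentiable (by simp)) (n + 1) (fun w hw => ?_) k hu]
      · rw [pd_evalPd hσ, hNeval u]
        simp only [Nat.cast_add, Nat.cast_one, Nat.factorial_succ, Nat.cast_mul, Nat.cast_ofNat,
          map_sub, map_mul, map_add, map_natCast, map_ofNat, evalPd_X, pdIter, List.foldl_cons,
          List.foldl_nil, List.length_append, List.length_cons, List.length_nil, zero_add,
          List.map_append, List.map_cons, List.map_nil, List.prod_append, List.prod_cons,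
          List.prod_nil, mul_one, n]
        ring
      · rw [hwp σ hσ w hw, hNeval]

theorem exists_aeval_eq_evalPd {n : ℕ} {p : DiffPoly g}
    (hp : p ∈ supported ℚ {L : List (Fin g) | L.length ≤ n}) :
    ∃ P : MvPolynomial {α : List (Fin g) // α.length ≤ n} ℚ, ∀ σ u,
      aeval (fun v : {α : List (Fin g) // α.length ≤ n} => pdIter v.1 σ u) P = evalPd σ u p := by
  obtain ⟨P, rfl⟩ := exists_rename_eq_of_vars_subset_range p Subtype.val Subtype.val_injective
    (by simpa [mem_supported] using hp)
  exact ⟨P, fun σ u => by rw [evalPd, aeval_rename]; rfl⟩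

theorem exists_sigma_pow_four_mul_wp_combination_eq (i j k l m : Fin g) :
    ∃ Q ∈ supported ℚ {L : List (Fin g) | L.length ≤ 5},
      ∀ σ : (Fin g → ℂ) → ℂ, ContDiff ℂ ⊤ σ → ∀ u : Fin g → ℂ, σ u ≠ 0 →
        σ u ^ 4 * (wp σ i j [k, l, m] u + wp2 σ i j u * wp σ k l [m] u
            - 13 * wp2 σ l m u * wp σ i j [k] u) = evalPd σ u Q := by
  obtain ⟨A₃, hA₃, h₃⟩ := exists_wp_eq_div i j [k, l, m]
  obtain ⟨A₀, hA₀, h₀⟩ := exists_wp_eq_div i j []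
  obtain ⟨B₁, hB₁, hB⟩ := exists_wp_eq_div k l [m]
  obtain ⟨C₀, hC₀, hC⟩ := exists_wp_eq_div l m []
  obtain ⟨A₁, hA₁, h₁⟩ := exists_wp_eq_div i j [k]
  refine ⟨A₃ + X [] * A₀ * B₁ + X [i] * X [j] * B₁ - 2 * A₀ * X [k] * X [l] * X [m]
      - 13 * (X [] * C₀ * A₁ + X [l] * X [m] * A₁ - 2 * C₀ * X [i] * X [j] * X [k]), ?_,
    fun σ hσ u hu => ?_⟩
  · have hX (L : List (Fin g)) (hL : L.length ≤ 5 := by simp) :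
        X L ∈ supported ℚ {L : List (Fin g) | L.length ≤ 5} :=
      X_mem_supported.mpr hL
    have h5 {n : ℕ} (hn : n ≤ 5) := supported_length_mono (g := g) hn
    replace hA₀ := h5 (by simp) hA₀
    replace hB₁ := h5 (by simp) hB₁
    replace hC₀ := h5 (by simp) hC₀
    replace hA₁ := h5 (by simp) hA₁
    refine sub_mem (sub_mem (add_mem (add_mem hA₃ ?_) ?_) ?_)
      (mul_mem (ofNat_mem _ 13) (sub_mem (add_mem ?_ ?_) ?_))
    all_goals repeat' apply mul_mem
    all_goals first | exact hX _ | exact ofNat_mem _ 2 | assumption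
  · rw [h₃ σ hσ u hu, hB σ hσ u hu, h₁ σ hσ u hu, show wp2 σ i j = wp σ i j [] from rfl,
      show wp2 σ l m = wp σ l m [] from rfl, h₀ σ hσ u hu, hC σ hσ u hu]
    simp only [List.length_cons, List.length_nil, zero_add, Nat.reduceAdd, Nat.factorial,
      Nat.succ_eq_add_one, mul_one, Nat.reduceMul, Nat.cast_ofNat, List.map_cons, List.map_nil,
      List.prod_cons, List.prod_nil, pow_zero, Nat.factorial_zero, Nat.cast_one, one_mul, pow_one,
      Nat.factorial_one, neg_mul, map_sub, map_add, map_mul, evalPd_X, pdIter, List.foldl_nil,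
      List.foldl_cons, map_ofNat]
    field_simp
    ring

end Kleinian

open Kleinian

theorem statement8_general {g : ℕ} (i j k l m : Fin g) :
    ∃ P : MvPolynomial {α : List (Fin g) // α.length ≤ 5} ℚ,
      ∀ σ : (Fin g → ℂ) → ℂ, ContDiff ℂ ⊤ σ → ∀ u : Fin g → ℂ, σ u ≠ 0 →
        σ u ^ 4 * (wp σ i j [k, l, m] u + wp2 σ i j u * wp σ k l [m] u
            - 13 * wp2 σ l m u * wp σ i j [k] u)
          = MvPolynomial.aeval (fun v : {α : List (Fin g) // α.length ≤ 5} =>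
              pdIter v.1 σ u) P := by
  obtain ⟨Q, hQ, hcomb⟩ := exists_sigma_pow_four_mul_wp_combination_eq i j k l m
  obtain ⟨P, hP⟩ := exists_aeval_eq_evalPd hQ
  exact ⟨P, fun σ hσ u hu => by rw [hcomb σ hσ u hu, hP]⟩

/-- there is a universal polynomial P in the partial derivatives of σ of
order at most 5 such that σ⁴·(℘_{ijklm} + ℘_{ij}℘_{klm} − 13℘_{lm}℘_{ijk}) = P(∂^α σ);
in particular this five-index combination has poles of order at most four. -/
theorem statement8 {g : ℕ} (hg : 1 ≤ g) (i j k l m : Fin g) :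
    ∃ P : MvPolynomial {α : List (Fin g) // α.length ≤ 5} ℚ,
      ∀ σ : (Fin g → ℂ) → ℂ, ContDiff ℂ ⊤ σ → ∀ u : Fin g → ℂ, σ u ≠ 0 →
        σ u ^ 4 * (wp σ i j [k, l, m] u + wp2 σ i j u * wp σ k l [m] u
            - 13 * wp2 σ l m u * wp σ i j [k] u)
          = MvPolynomial.aeval (fun v : {α : List (Fin g) // α.length ≤ 5} =>
              pdIter v.1 σ u) P :=
  statement8_general i j k l m
end
end

section
/- Fix g ≥ 1 and indices i, j, k, l, m, n ∈ {1,…,g}, and define (wherever σ ≠ 0) ℱ_{ijklmn} = ℘_{ij}℘_{kl}℘_{mn} − ℘_{ij}℘_{kn}℘_{lm} − ℘_{il}℘_{jk}℘_{mn} + ℘_{il}℘_{jn}℘_{km} + ℘_{im}℘_{jl}℘_{kn} − ℘_{im}℘_{jn}℘_{kl} + ℘_{in}℘_{jk}℘_{lm} − ℘_{in}℘_{jl}℘_{km}. Then there exists a universal polynomial P in the partial derivatives of σ of order at most 2 such that for every infinitely complex-differentiable σ : ℂ^g → ℂ and every u with σ(u) ≠ 0, σ(u)⁴ · ℱ_{ijklmn}(u)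 = P evaluated at the partial derivatives of σ at u. In particular ℱ_{ijklmn}, a priori with poles of order six along the zero set of σ, has poles of order at most four there. -/
noncomputable section

/-- The ℱ-function ℱ_{ijklmn}. -/
def Ffun {g : ℕ} (σ : (Fin g → ℂ) → ℂ) (i j k l m n : Fin g) : (Fin g → ℂ) → ℂ :=
  fun u =>
    wp2 σ i j u * wp2 σ k l u * wp2 σ m n u - wp2 σ i j u * wp2 σ k n u * wp2 σ l m u
      - wp2 σ i l u * wp2 σ j k u * wp2 σ m n u + wp2 σ i l u * wp2 σ j n u * wp2 σ k m u
      + wp2 σ i m u * wp2 σ j l u * wp2 σ k n u - wp2 σ i m u * wp2 σ j n u * wp2 σ k l u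
      + wp2 σ i n u * wp2 σ j k u * wp2 σ l m u - wp2 σ i n u * wp2 σ j l u * wp2 σ k m u


/-- Auxiliary variable for a second partial derivative. -/
def XX {g : ℕ} (a b : Fin g) : MvPolynomial {α : List (Fin g) // α.length ≤ 2} ℚ :=
  MvPolynomial.X ⟨[a, b], by simp⟩

/-- Auxiliary variable for a first partial derivative. -/
def Y {g : ℕ} (a : Fin g) : MvPolynomial {α : List (Fin g) // α.length ≤ 2} ℚ :=
  MvPolynomial.X ⟨[a], by simp⟩

/-- Auxiliary variable for the function value itself. -/
def Z {g : ℕ} : MvPolynomial {α : List (Fin g) // α.length ≤ 2} ℚ :=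
  MvPolynomial.X ⟨[], by simp⟩

lemma aeval_XX {g : ℕ} (σ : (Fin g → ℂ) → ℂ) (u : Fin g → ℂ) (a b : Fin g) :
    MvPolynomial.aeval (fun v : {α : List (Fin g) // α.length ≤ 2} =>
      pdIter v.1 σ u) (XX a b) = pd b (pd a σ) u := by
  simp [XX, pdIter]

lemma aeval_Y {g : ℕ} (σ : (Fin g → ℂ) → ℂ) (u : Fin g → ℂ) (a : Fin g) :
    MvPolynomial.aeval (fun v : {α : List (Fin g) // α.length ≤ 2} =>
      pdIter v.1 σ u) (Y a) = pd a σ u := by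
  simp [Y, pdIter]

lemma aeval_Z {g : ℕ} (σ : (Fin g → ℂ) → ℂ) (u : Fin g → ℂ) :
    MvPolynomial.aeval (fun v : {α : List (Fin g) // α.length ≤ 2} =>
      pdIter v.1 σ u) (Z : MvPolynomial {α : List (Fin g) // α.length ≤ 2} ℚ) = σ u := by
  simp [Z, pdIter]

set_option maxHeartbeats 3200000 in
/-- there is a universal polynomial P in the partial derivatives of σ of
order at most 2 such that σ⁴·ℱ_{ijklmn} = P(∂^α σ); in particular ℱ_{ijklmn} has poles
of order at most four along the zero set of σ. -/
theorem statement12 {g : ℕ} (hg : 1 ≤ g) (i j k l m n : Fin g) :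
    ∃ P : MvPolynomial {α : List (Fin g) // α.length ≤ 2} ℚ,
      ∀ σ : (Fin g → ℂ) → ℂ, ContDiff ℂ ⊤ σ → ∀ u : Fin g → ℂ, σ u ≠ 0 →
        σ u ^ 4 * Ffun σ i j k l m n u
          = MvPolynomial.aeval (fun v : {α : List (Fin g) // α.length ≤ 2} =>
              pdIter v.1 σ u) P := by

  refine ⟨
      XX i j * XX k l * Y m * Y n
      + XX i j * XX k n * XX l m * Z
      - XX i j * XX k n * Y l * Y m
      - XX i j * XX l m * Y k * Y n
      + XX i j * XX m n * Y k * Y l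
      - XX i j * XX k l * XX m n * Z
      + XX i l * XX j k * XX m n * Z
      - XX i l * XX j k * Y m * Y n
      - XX i l * XX j n * XX k m * Z
      + XX i l * XX j n * Y k * Y m
      + XX i l * XX k m * Y j * Y n
      - XX i l * XX m n * Y j * Y k
      - XX i m * XX j l * XX k n * Z
      + XX i m * XX j l * Y k * Y n
      + XX i m * XX j n * XX k l * Z
      - XX i m * XX j n * Y k * Y l
      - XX i m * XX k l * Y j * Y n
      + XX i m * XX k n * Y j * Y l
      - XX i n * XX j k * XX l m * Z
      + XX i n * XX j k * Y l * Y m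
      + XX i n * XX j l * XX k m * Z
      - XX i n * XX j l * Y k * Y m
      - XX i n * XX k m * Y j * Y l
      + XX i n * XX l m * Y j * Y k
      + XX j k * XX l m * Y i * Y n
      - XX j k * XX m n * Y i * Y l
      - XX j l * XX k m * Y i * Y n
      + XX j l * XX k n * Y i * Y m
      - XX j n * XX k l * Y i * Y m
      + XX j n * XX k m * Y i * Y l
      + XX k l * XX m n * Y i * Y j
      - XX k n * XX l m * Y i * Y j, ?_⟩
  intro σ _ u hu
  simp only [map_add, map_sub, map_mul, aeval_XX, aeval_Y, aeval_Z]
  unfold Ffun wp2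
  field_simp
  ring
end
end
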